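/- arXiv:2203.16233 — 4 statements merged into one kernel-verified Lean document; each statement's English description precedes it below -/
import Mathlib

section
/- Suppose the points x_1,…,x_n are not all contained in a single line in ℝ^p and that the spatial median t(F_n) satisfies t(F_n) ≠ x_ℓ for all ℓ = 1,…,n. Then for every i, j, the spatial median of the perturbed sample satisfies (1/ε){t(F_{n,i,j,ε}) − t(F_n)} → h_{ij} as ε → 0, where h_{ij} = G^{-1} A_i e_j, with y_ℓ := x_ℓ − t(F_n), A_ℓ := ‖y_ℓ‖^{-1} (I_p − y_ℓ y_ℓ'/‖y_ℓ‖²), and G := Σ_{ℓ=1}^n A_ℓ (which is invertible under the stated assumptions). -/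
/-
The spatial median `t₀` of a sample that avoids the sample points is a zero of the estimating
function `t ↦ ∑ ℓ U (x ℓ - t)`, where `U w = w / ‖w‖` is the spatial sign; conversely, every zero
is a minimiser, because `U (x - t)` is a subgradient of `‖x - ·‖` at `t`. The derivative of `U`
at `y ℓ = x ℓ - t₀` is `A ℓ`, so for the sample perturbed along `ε ↦ x + ε • d` the estimating
function has `t`-derivative `-G` and `ε`-derivative `∑ ℓ A ℓ (d ℓ)` at `(0, t₀)`. By
the equality case of Cauchy–Schwarz, `G` is positive definite unless all the points lie on a line
through `t₀`, so the implicit function theorem gives a differentiable curve `ψ` of zeros with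
`G (ψ' 0) = ∑ ℓ A ℓ (d ℓ)`. It remains to see that `ψ ε` is the spatial median of the perturbed
sample. Non-collinearity survives small perturbations, and the spatial median of a non-collinear
sample is unique: if `s ≠ t` both minimise, so does their midpoint, which forces equality in
`‖(x ℓ - s) + (x ℓ - t)‖ ≤ ‖x ℓ - s‖ + ‖x ℓ - t‖` for every `ℓ`, i.e. puts every `x ℓ` on the line
through `s` and `t`.
-/

open Filter Set Topology InnerProductSpace ContinuousLinearMap

/-- The perturbed sample `F_{n,i,j,ε}`, in which `x i` is replaced by `x i + ε • e j`. -/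
noncomputable def eperturb (n p : ℕ) (x : Fin n → EuclideanSpace ℝ (Fin p))
    (i : Fin n) (j : Fin p) (ε : ℝ) : Fin n → EuclideanSpace ℝ (Fin p) :=
  Function.update x i (x i + ε • EuclideanSpace.single j (1 : ℝ))

variable {F : Type*} [NormedAddCommGroup F] [InnerProductSpace ℝ F]

-- `spatialSign 0 = 0`, because `0⁻¹ = 0`.
noncomputable def spatialSign (w : F) : F := ‖w‖⁻¹ • w

noncomputable def spatialSignDeriv (w : F) : F →L[ℝ] F :=
  ‖w‖⁻¹ • (ContinuousLinearMap.id ℝ F - (‖w‖ ^ 2)⁻¹ • rankOne ℝ w w)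

lemma spatialSignDeriv_apply (w v : F) :
    spatialSignDeriv w v = ‖w‖⁻¹ • (v - (‖w‖ ^ 2)⁻¹ • inner ℝ w v • w) := by
  simp [spatialSignDeriv]

lemma norm_spatialSign_le (w : F) : ‖spatialSign w‖ ≤ 1 := by
  rcases eq_or_ne w 0 with rfl | hw
  · simp [spatialSign]
  · simp [spatialSign, norm_smul, hw]

lemma inner_spatialSign_self (w : F) : inner ℝ (spatialSign w) w = ‖w‖ := by
  rcases eq_or_ne w 0 with rfl | hw
  · simp [spatialSign]
  · rw [spatialSign, real_inner_smul_left, real_inner_self_eq_norm_sq]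
    field_simp

lemma hasStrictFDerivAt_norm {w : F} (hw : w ≠ 0) :
    HasStrictFDerivAt (‖·‖) (innerSL ℝ (spatialSign w)) w := by
  have hsqrt := (hasStrictFDerivAt_norm_sq w).sqrt (by positivity)
  simp only [Real.sqrt_sq (norm_nonneg _)] at hsqrt
  refine hsqrt.congr_fderiv ?_
  ext v
  simp only [one_div, mul_inv_rev, smul_apply, coe_innerSL_apply, nsmul_eq_mul, Nat.cast_ofNat,
    smul_eq_mul, spatialSign, map_smul]
  field_simp

lemma hasStrictFDerivAt_spatialSign {w : F} (hw : w ≠ 0) :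
    HasStrictFDerivAt spatialSign (spatialSignDeriv w) w := by
  have hinv : HasStrictFDerivAt (fun v : F => ‖v‖⁻¹)
      ((-(‖w‖ ^ 2)⁻¹) • innerSL ℝ (spatialSign w)) w := by
    have := (hasStrictDerivAt_inv (norm_ne_zero_iff.2 hw)).comp_hasStrictFDerivAt w
      (hasStrictFDerivAt_norm hw)
    simpa [Function.comp_def] using this
  refine (hinv.fun_smul (hasStrictFDerivAt_id w)).congr_fderiv ?_
  ext v
  simp only [spatialSign, map_smul, neg_smul, id_eq, add_apply, smul_apply,
    ContinuousLinearMap.id_apply, smulRight_apply, neg_apply, coe_innerSL_apply, smul_eq_mul,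
    spatialSignDeriv_apply]
  match_scalars <;> field_simp

lemma inner_spatialSignDeriv_self (w v : F) :
    inner ℝ v (spatialSignDeriv w v) =
      ‖w‖⁻¹ * (‖v‖ ^ 2 - (‖w‖ ^ 2)⁻¹ * inner ℝ w v ^ 2) := by
  rw [spatialSignDeriv_apply, real_inner_smul_right, inner_sub_right, real_inner_smul_right,
    real_inner_smul_right, real_inner_self_eq_norm_sq, real_inner_comm v w]
  ring

lemma inner_spatialSignDeriv_self_nonneg (w v : F) :
    0 ≤ inner ℝ v (spatialSignDeriv w v) := by
  rw [inner_spatialSignDeriv_self]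
  rcases eq_or_ne w 0 with rfl | hw
  · simp
  have hcs : inner ℝ w v ^ 2 ≤ ‖w‖ ^ 2 * ‖v‖ ^ 2 := by
    rw [← mul_pow, sq_le_sq, abs_mul, abs_norm, abs_norm]
    exact abs_real_inner_le_norm w v
  have : (‖w‖ ^ 2)⁻¹ * inner ℝ w v ^ 2 ≤ ‖v‖ ^ 2 := by
    rw [inv_mul_le_iff₀ (by positivity)]; exact hcs
  have := sub_nonneg.2 this
  positivity

lemma inner_spatialSignDeriv_self_pos {w v : F} (hv : v ≠ 0) (hwv : ∀ r : ℝ, w ≠ r • v) :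
    0 < inner ℝ v (spatialSignDeriv w v) := by
  have hw : w ≠ 0 := by simpa using hwv 0
  rw [inner_spatialSignDeriv_self]
  have hcs : |inner ℝ w v| < ‖w‖ * ‖v‖ := by
    refine lt_of_le_of_ne (abs_real_inner_le_norm w v) fun h => ?_
    obtain ⟨r, -, hr⟩ := (norm_inner_eq_norm_iff (𝕜 := ℝ) hv hw).1 (by
      rwa [real_inner_comm, Real.norm_eq_abs, mul_comm])
    exact hwv r hr
  have hcs' : inner ℝ w v ^ 2 < ‖w‖ ^ 2 * ‖v‖ ^ 2 := by
    rw [← mul_pow, sq_lt_sq, abs_mul, abs_norm, abs_norm]; exact hcs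
  have : (‖w‖ ^ 2)⁻¹ * inner ℝ w v ^ 2 < ‖v‖ ^ 2 := by
    rw [inv_mul_lt_iff₀ (by positivity)]; exact hcs'
  have := sub_pos.2 this
  have : 0 < ‖w‖ := norm_pos_iff.2 hw
  positivity

def IsSpatialMedian {ι : Type*} [Fintype ι] (x : ι → F) (t : F) : Prop :=
  ∀ s, ∑ ℓ, ‖x ℓ - t‖ ≤ ∑ ℓ, ‖x ℓ - s‖

section SpatialMedian

variable {ι : Type*} [Fintype ι] {x : ι → F} {s t : F}

lemma norm_sub_add_inner_spatialSign_le (a s t : F) :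
    ‖a - t‖ + inner ℝ (spatialSign (a - t)) (t - s) ≤ ‖a - s‖ := by
  calc ‖a - t‖ + inner ℝ (spatialSign (a - t)) (t - s)
      = inner ℝ (spatialSign (a - t)) (a - s) := by
        rw [← inner_spatialSign_self (a - t), ← inner_add_right, sub_add_sub_cancel]
    _ ≤ ‖spatialSign (a - t)‖ * ‖a - s‖ := real_inner_le_norm _ _
    _ ≤ ‖a - s‖ := mul_le_of_le_one_left (norm_nonneg _) (norm_spatialSign_le _)

lemma isSpatialMedian_of_sum_spatialSign_eq_zero (h : ∑ ℓ, spatialSign (x ℓ - t) = 0) :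
    IsSpatialMedian x t := fun s => by
  calc ∑ ℓ, ‖x ℓ - t‖
      = ∑ ℓ, (‖x ℓ - t‖ + inner ℝ (spatialSign (x ℓ - t)) (t - s)) := by
        rw [Finset.sum_add_distrib, ← sum_inner, h, inner_zero_left, add_zero]
    _ ≤ ∑ ℓ, ‖x ℓ - s‖ := Finset.sum_le_sum fun ℓ _ => norm_sub_add_inner_spatialSign_le _ _ _

lemma hasStrictFDerivAt_sum_norm_sub (hx : ∀ ℓ, x ℓ ≠ t) :
    HasStrictFDerivAt (fun s => ∑ ℓ, ‖x ℓ - s‖)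
      (-innerSL ℝ (∑ ℓ, spatialSign (x ℓ - t))) t := by
  rw [map_sum, ← Finset.sum_neg_distrib]
  refine HasStrictFDerivAt.fun_sum fun ℓ _ => ?_
  have := (hasStrictFDerivAt_norm (sub_ne_zero.2 (hx ℓ))).comp t
    ((hasStrictFDerivAt_const (x ℓ) t).sub (hasStrictFDerivAt_id t))
  simpa using this

lemma IsSpatialMedian.sum_spatialSign_eq_zero (ht : IsSpatialMedian x t) (hx : ∀ ℓ, x ℓ ≠ t) :
    ∑ ℓ, spatialSign (x ℓ - t) = 0 := by
  have hmin : IsLocalMin (fun s => ∑ ℓ, ‖x ℓ - s‖) t := Eventually.of_forall ht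
  have hd := hmin.hasFDerivAt_eq_zero (hasStrictFDerivAt_sum_norm_sub hx).hasFDerivAt
  rw [neg_eq_zero] at hd
  have hself := DFunLike.congr_fun hd (∑ ℓ, spatialSign (x ℓ - t))
  rw [coe_innerSL_apply, zero_apply] at hself
  exact inner_self_eq_zero.1 hself

lemma exists_eq_smul_sub_add_of_sameRay {a : F} (h : SameRay ℝ (a - s) (a - t)) (hst : s ≠ t) :
    ∃ r : ℝ, a = r • (t - s) + s := by
  rcases eq_or_ne (a - s) 0 with has | has
  · exact ⟨0, by rw [zero_smul, zero_add, ← sub_eq_zero, has]⟩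
  obtain ⟨r, -, hr⟩ := h.exists_nonneg_left has
  have hr1 : 1 - r ≠ 0 := by
    rintro hr1
    rw [show r = 1 by linarith, one_smul, sub_right_inj] at hr
    exact hst hr
  have hts : (1 - r) • (a - s) = t - s := by rw [sub_smul, one_smul, hr]; abel
  refine ⟨(1 - r)⁻¹, ?_⟩
  rw [← hts, smul_smul, inv_mul_cancel₀ hr1, one_smul, sub_add_cancel]

lemma IsSpatialMedian.eq_of_not_collinear (hx : ¬Collinear ℝ (range x))
    (hs : IsSpatialMedian x s) (ht : IsSpatialMedian x t) : s = t := by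
  by_contra hst
  set m : F := (2 : ℝ)⁻¹ • (s + t)
  have hm : ∀ ℓ, ‖(x ℓ - s) + (x ℓ - t)‖ = 2 * ‖x ℓ - m‖ := fun ℓ => by
    rw [show (x ℓ - s) + (x ℓ - t) = (2 : ℝ) • (x ℓ - m) by module, norm_smul, Real.norm_two]
  have hsum : ∑ ℓ, ‖(x ℓ - s) + (x ℓ - t)‖ = ∑ ℓ, (‖x ℓ - s‖ + ‖x ℓ - t‖) := by
    refine le_antisymm (Finset.sum_le_sum fun ℓ _ => norm_add_le _ _) ?_
    rw [Finset.sum_congr rfl fun ℓ _ => hm ℓ, ← Finset.mul_sum, Finset.sum_add_distrib,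
      le_antisymm (ht s) (hs t)]
    linarith [hs m]
  have hray : ∀ ℓ, SameRay ℝ (x ℓ - s) (x ℓ - t) := fun ℓ =>
    sameRay_iff_norm_add.2 ((Finset.sum_eq_sum_iff_of_le fun ℓ _ => norm_add_le _ _).1 hsum ℓ
      (Finset.mem_univ ℓ))
  refine hx ((collinear_iff_exists_forall_eq_smul_vadd _).2 ⟨s, t - s, ?_⟩)
  rintro _ ⟨ℓ, rfl⟩
  exact exists_eq_smul_sub_add_of_sameRay (hray ℓ) hst

end SpatialMedian

lemma collinear_range_iff_exists_eq_add_smul {k V ι : Type*} [Field k] [AddCommGroup V]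
    [Module k V] {x : ι → V} :
    Collinear k (range x) ↔ ∃ a v : V, ∀ ℓ, ∃ c : k, x ℓ = a + c • v := by
  simp [collinear_iff_exists_forall_eq_smul_vadd, add_comm]

lemma exists_not_collinear_triple {k V P ι : Type*} [Field k] [AddCommGroup V] [Module k V]
    [AddTorsor V P] {x : ι → P} (hx : ¬Collinear k (range x)) :
    ∃ a b c, ¬Collinear k {x a, x b, x c} := by
  by_contra! h
  apply hx
  rcases isEmpty_or_nonempty ι with hι | ⟨⟨a⟩⟩
  · rw [range_eq_empty]; exact collinear_empty k P
  by_cases hconst : ∀ b, x b = x a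
  · exact (collinear_singleton k (x a)).subset (range_subset_iff.2 hconst)
  push Not at hconst
  obtain ⟨b, hb⟩ := hconst
  refine (collinear_iff_exists_forall_eq_smul_vadd _).2 ⟨x a, x b -ᵥ x a, ?_⟩
  rintro _ ⟨c, rfl⟩
  have hc := (h a b c).mem_affineSpan_of_mem_of_ne (p₁ := x a) (p₂ := x b) (p₃ := x c)
    (by simp) (by simp) (by simp) hb.symm
  obtain ⟨r, hr⟩ := mem_affineSpan_pair_iff_exists_lineMap_eq.1 hc
  exact ⟨r, by rw [← hr, AffineMap.lineMap_apply]⟩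

lemma ContinuousAt.eventually_not_collinear_range {𝕜 X E ι : Type*} [NontriviallyNormedField 𝕜]
    [CompleteSpace 𝕜] [TopologicalSpace X] [NormedAddCommGroup E] [NormedSpace 𝕜 E]
    [FiniteDimensional 𝕜 E] {z : X → ι → E} {a : X} (hz : ContinuousAt z a)
    (h : ¬Collinear 𝕜 (range (z a))) : ∀ᶠ b in 𝓝 a, ¬Collinear 𝕜 (range (z b)) := by
  obtain ⟨ℓ₁, ℓ₂, ℓ₃, hindep⟩ := exists_not_collinear_triple h
  have hcoord (ℓ : ι) : ContinuousAt (fun b => z b ℓ) a :=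
    (continuous_apply ℓ).continuousAt.comp hz
  have htriple : ContinuousAt (fun b => ![z b ℓ₁, z b ℓ₂, z b ℓ₃]) a := by fun_prop
  filter_upwards [htriple.eventually_mem (isOpen_setOfPred_affineIndependent.mem_nhds
    (affineIndependent_iff_not_collinear_set.2 hindep))] with b hb hcol
  refine affineIndependent_iff_not_collinear_set.1 hb (hcol.subset ?_)
  simp [insert_subset_iff]

lemma ContinuousLinearMap.isInvertible_of_injective {𝕜 E : Type*} [NontriviallyNormedField 𝕜]
    [CompleteSpace 𝕜] [NormedAddCommGroup E] [NormedSpace 𝕜 E] [FiniteDimensional 𝕜 E]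
    {f : E →L[𝕜] E} (hf : Function.Injective f) : f.IsInvertible :=
  ⟨(LinearEquiv.ofInjectiveEndo f.toLinearMap hf).toContinuousLinearEquiv, rfl⟩

-- The Hessian of `t ↦ ∑ ℓ, ‖x ℓ - t‖`; at the spatial median it is the matrix `G` of the paper.
noncomputable def sumDistHessian {ι : Type*} [Fintype ι] (x : ι → F) (t : F) : F →L[ℝ] F :=
  ∑ ℓ, spatialSignDeriv (x ℓ - t)

section Perturbation

variable {ι : Type*} [Fintype ι] {x d : ι → F} {t₀ h : F}

lemma sumDistHessian_apply (x : ι → F) (t v : F) :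
    sumDistHessian x t v = ∑ ℓ, spatialSignDeriv (x ℓ - t) v := by
  simp [sumDistHessian]

lemma inner_sumDistHessian_pos (hx : ¬Collinear ℝ (range x)) (t : F) {v : F} (hv : v ≠ 0) :
    0 < inner ℝ v (sumDistHessian x t v) := by
  have hoff : ∃ ℓ, ∀ r : ℝ, x ℓ - t ≠ r • v := by
    by_contra! h
    refine hx ((collinear_iff_exists_forall_eq_smul_vadd _).2 ⟨t, v, ?_⟩)
    rintro _ ⟨ℓ, rfl⟩
    obtain ⟨r, hr⟩ := h ℓ
    exact ⟨r, by rw [← hr, vadd_eq_add, sub_add_cancel]⟩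
  obtain ⟨ℓ₀, hℓ₀⟩ := hoff
  rw [sumDistHessian_apply, inner_sum]
  exact Finset.sum_pos' (fun ℓ _ => inner_spatialSignDeriv_self_nonneg _ _)
    ⟨ℓ₀, Finset.mem_univ _, inner_spatialSignDeriv_self_pos hv hℓ₀⟩

lemma injective_sumDistHessian (hx : ¬Collinear ℝ (range x)) (t : F) :
    Function.Injective (sumDistHessian x t) := by
  refine (injective_iff_map_eq_zero _).2 fun v hv => ?_
  by_contra hv0
  have := inner_sumDistHessian_pos hx t hv0
  rw [hv, inner_zero_right] at this
  exact lt_irrefl 0 this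

lemma hasStrictFDerivAt_sum_spatialSign_perturb (hne : ∀ ℓ, x ℓ ≠ t₀) :
    HasStrictFDerivAt (fun q : ℝ × F => ∑ ℓ, spatialSign (x ℓ + q.1 • d ℓ - q.2))
      (∑ ℓ, (spatialSignDeriv (x ℓ - t₀)).comp ((fst ℝ ℝ F).smulRight (d ℓ) - snd ℝ ℝ F))
      (0, t₀) := by
  refine HasStrictFDerivAt.fun_sum fun ℓ _ => ?_
  have hlin : HasStrictFDerivAt (fun q : ℝ × F => x ℓ + q.1 • d ℓ - q.2)
      ((fst ℝ ℝ F).smulRight (d ℓ) - snd ℝ ℝ F) (0, t₀) :=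
    ((hasStrictFDerivAt_fst.smul_const (d ℓ)).const_add (x ℓ)).sub hasStrictFDerivAt_snd
  have hsign : HasStrictFDerivAt spatialSign (spatialSignDeriv (x ℓ - t₀))
      (x ℓ + (0 : ℝ) • d ℓ - t₀) := by
    simpa using hasStrictFDerivAt_spatialSign (sub_ne_zero.2 (hne ℓ))
  exact hsign.comp ((0 : ℝ), t₀) hlin

theorem exists_hasDerivAt_sum_spatialSign_perturb_eq_zero [FiniteDimensional ℝ F]
    (hG : Function.Injective (sumDistHessian x t₀)) (hne : ∀ ℓ, x ℓ ≠ t₀)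
    (hcrit : ∑ ℓ, spatialSign (x ℓ - t₀) = 0)
    (hh : sumDistHessian x t₀ h = ∑ ℓ, spatialSignDeriv (x ℓ - t₀) (d ℓ)) :
    ∃ ψ : ℝ → F, HasDerivAt ψ h 0 ∧
      ∀ᶠ ε in 𝓝 0, ∑ ℓ, spatialSign (x ℓ + ε • d ℓ - ψ ε) = 0 := by
  have hf := hasStrictFDerivAt_sum_spatialSign_perturb (d := d) hne
  set f' := ∑ ℓ, (spatialSignDeriv (x ℓ - t₀)).comp ((fst ℝ ℝ F).smulRight (d ℓ) - snd ℝ ℝ F)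
  have hinr : ∀ v, (f' ∘L inr ℝ ℝ F) v = -sumDistHessian x t₀ v := fun v => by
    simp [f', sumDistHessian_apply]
  have hinl : (f' ∘L inl ℝ ℝ F) 1 = ∑ ℓ, spatialSignDeriv (x ℓ - t₀) (d ℓ) := by
    simp [f']
  have hinv : (f' ∘L inr ℝ ℝ F).IsInvertible := by
    refine ContinuousLinearMap.isInvertible_of_injective fun v w hvw => ?_
    rw [hinr, hinr, neg_inj] at hvw
    exact hG hvw
  refine ⟨hf.implicitFunctionOfProdDomain hinv, ?_, ?_⟩
  · have hψ := (hf.hasStrictFDerivAt_implicitFunctionOfProdDomain hinv).hasStrictDerivAt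
    convert hψ.hasDerivAt using 1
    refine hinv.injective ?_
    change _ = (f' ∘L inr ℝ ℝ F) (-(f' ∘L inr ℝ ℝ F).inverse ((f' ∘L inl ℝ ℝ F) 1))
    rw [map_neg, hinv.self_apply_inverse, hinr, hh, hinl]
  · simpa [hcrit] using hf.eventually_apply_implicitFunctionOfProdDomain hinv

theorem IsSpatialMedian.hasDerivAt_perturb [FiniteDimensional ℝ F]
    (hx : ¬Collinear ℝ (range x)) (ht₀ : IsSpatialMedian x t₀) (hne : ∀ ℓ, x ℓ ≠ t₀)
    {tm : ℝ → F} (htm : ∀ᶠ ε in 𝓝 0, IsSpatialMedian (x + ε • d) (tm ε))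
    (hh : sumDistHessian x t₀ h = ∑ ℓ, spatialSignDeriv (x ℓ - t₀) (d ℓ)) :
    HasDerivAt tm h 0 := by
  obtain ⟨ψ, hψ, hcrit⟩ := exists_hasDerivAt_sum_spatialSign_perturb_eq_zero
    (injective_sumDistHessian hx t₀) hne (ht₀.sum_spatialSign_eq_zero hne) hh
  have hnc : ∀ᶠ ε in 𝓝 (0 : ℝ), ¬Collinear ℝ (range (x + ε • d)) :=
    ContinuousAt.eventually_not_collinear_range (by fun_prop) (by simpa using hx)
  refine hψ.congr_of_eventuallyEq ?_
  filter_upwards [htm, hcrit, hnc] with ε hm hc hn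
  exact hm.eq_of_not_collinear hn (isSpatialMedian_of_sum_spatialSign_eq_zero (by simpa using hc))

end Perturbation

lemma toEuclideanLin_spatialSignDeriv {m : Type*} [Fintype m] [DecidableEq m]
    (y : EuclideanSpace ℝ m) :
    Matrix.toEuclideanLin (‖y‖⁻¹ • ((1 : Matrix m m ℝ) - (‖y‖ ^ 2)⁻¹ •
      Matrix.vecMulVec (fun r => y r) (fun r => y r))) = (spatialSignDeriv y).toLinearMap := by
  have hrank : Matrix.vecMulVec (fun r => y r) (fun r => y r) =
      Matrix.toEuclideanLin.symm (rankOne ℝ y y).toLinearMap := by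
    rw [symm_toEuclideanLin_rankOne, star_trivial]
  rw [hrank, map_smul, map_sub, map_smul, LinearEquiv.apply_symm_apply, Matrix.toLpLin_one]
  rfl

lemma Matrix.toEuclideanLin_toLp_nonsing_inv_mul_mulVec {m : Type*} [Fintype m]
    [DecidableEq m] {G : Matrix m m ℝ} (hG : Function.Injective (Matrix.toEuclideanLin G))
    (B : Matrix m m ℝ) (v : m → ℝ) :
    Matrix.toEuclideanLin G (WithLp.toLp 2 ((G⁻¹ * B).mulVec v)) = WithLp.toLp 2 (B.mulVec v) := by
  have hunit : IsUnit G := Matrix.mulVec_injective_iff_isUnit.1 fun v w hvw =>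
    WithLp.toLp_injective 2 (hG (by simp [hvw]))
  rw [Matrix.toLpLin_apply, WithLp.ofLp_toLp, Matrix.mulVec_mulVec, ← mul_assoc,
    Matrix.mul_nonsing_inv _ ((Matrix.isUnit_iff_isUnit_det G).1 hunit), one_mul]

lemma Function.update_add_eq_add_single {ι E : Type*} [DecidableEq ι] [AddZeroClass E]
    (x : ι → E) (i : ι) (v : E) : Function.update x i (x i + v) = x + Pi.single i v := by
  ext ℓ : 1
  rcases eq_or_ne ℓ i with rfl | h
  · simp
  · simp [h]

/-- Suppose `x 0, …, x (n-1)` are not all contained in a single line in `ℝ^p`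
and the spatial median `t(F_n)` (the minimizer `t₀` of `t ↦ ∑ ℓ ‖x ℓ − t‖`, unique under the
stated assumption) satisfies `t₀ ≠ x ℓ` for all `ℓ`.  Then for every `i, j`, the spatial median
`tm ε` of the perturbed sample satisfies `(1/ε)(tm ε − t₀) → h_ij` as `ε → 0`, where
`h_ij = G⁻¹ Aᵢ eⱼ`, with `y ℓ = x ℓ − t₀`, `A ℓ = ‖y ℓ‖⁻¹ (I_p − y ℓ (y ℓ)'/‖y ℓ‖²)` and
`G = ∑ ℓ A ℓ` (invertible under the stated assumptions). -/
theorem stmt_7 (n p : ℕ) (x : Fin n → EuclideanSpace ℝ (Fin p))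
    (hline : ¬ ∃ (a v : EuclideanSpace ℝ (Fin p)), ∀ ℓ, ∃ c : ℝ, x ℓ = a + c • v)
    (t₀ : EuclideanSpace ℝ (Fin p))
    (ht₀ : ∀ t : EuclideanSpace ℝ (Fin p), ∑ ℓ, ‖x ℓ - t₀‖ ≤ ∑ ℓ, ‖x ℓ - t‖)
    (hne : ∀ ℓ, t₀ ≠ x ℓ)
    (i : Fin n) (j : Fin p)
    (tm : ℝ → EuclideanSpace ℝ (Fin p))
    (htm : ∀ ε : ℝ, ∀ t : EuclideanSpace ℝ (Fin p),
      ∑ ℓ, ‖eperturb n p x i j ε ℓ - tm ε‖ ≤ ∑ ℓ, ‖eperturb n p x i j ε ℓ - t‖)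
    (y : Fin n → EuclideanSpace ℝ (Fin p)) (hy : ∀ ℓ, y ℓ = x ℓ - t₀)
    (A : Fin n → Matrix (Fin p) (Fin p) ℝ)
    (hA : ∀ ℓ, A ℓ = ‖y ℓ‖⁻¹ • ((1 : Matrix (Fin p) (Fin p) ℝ)
      - (‖y ℓ‖ ^ 2)⁻¹ • Matrix.vecMulVec (fun r => y ℓ r) (fun r => y ℓ r)))
    (G : Matrix (Fin p) (Fin p) ℝ) (hG : G = ∑ ℓ, A ℓ) :
    Tendsto (fun ε : ℝ => ε⁻¹ • (tm ε - t₀)) (nhdsWithin 0 {0}ᶜ)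
      (nhds ((WithLp.equiv 2 (Fin p → ℝ)).symm
        ((G⁻¹ * A i).mulVec (Pi.single j 1 : Fin p → ℝ)))) := by
  have hx : ¬Collinear ℝ (range x) := collinear_range_iff_exists_eq_add_smul.not.2 hline
  have hAlin (ℓ) : Matrix.toEuclideanLin (A ℓ) = (spatialSignDeriv (x ℓ - t₀)).toLinearMap := by
    rw [hA, hy, toEuclideanLin_spatialSignDeriv]
  have hGlin : Matrix.toEuclideanLin G = (sumDistHessian x t₀).toLinearMap := by
    simp [hG, hAlin, sumDistHessian]
  set d : Fin n → EuclideanSpace ℝ (Fin p) := Pi.single i (EuclideanSpace.single j 1)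
  have hh : sumDistHessian x t₀ (WithLp.toLp 2 ((G⁻¹ * A i).mulVec (Pi.single j 1))) =
      ∑ ℓ, spatialSignDeriv (x ℓ - t₀) (d ℓ) := by
    have hGinj : Function.Injective (Matrix.toEuclideanLin G) :=
      hGlin ▸ injective_sumDistHessian hx t₀
    rw [Fintype.sum_eq_single i fun ℓ hℓ => by simp [d, hℓ], ← coe_coe,
      ← hGlin, Matrix.toEuclideanLin_toLp_nonsing_inv_mul_mulVec hGinj, ← coe_coe, ← hAlin,
      show d i = EuclideanSpace.single j 1 from Pi.single_eq_same _ _]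
    rfl
  have hmed (ε : ℝ) : IsSpatialMedian (x + ε • d) (tm ε) := fun s => by
    simpa only [eperturb, Function.update_add_eq_add_single, Pi.single_smul'] using htm ε s
  have htm0 : tm 0 = t₀ := IsSpatialMedian.eq_of_not_collinear hx (by simpa using hmed 0) ht₀
  have hderiv := IsSpatialMedian.hasDerivAt_perturb hx ht₀ (fun ℓ => (hne ℓ).symm)
    (Eventually.of_forall hmed) hh
  refine (hasDerivAt_iff_tendsto_slope.1 hderiv).congr fun ε => ?_
  rw [slope_def_module, htm0, sub_zero]
end

section
/- Let x_1,…,x_n ∈ ℝ^p and t ∈ ℝ^p be such that y_ℓ := x_ℓ − t is nonzero for every ℓ, and suppose the vectors y_1,…,y_n are not all contained in a single one-dimensional linear subspace of ℝ^p. Then the matrix G := Σ_{ℓ=1}^n ‖y_ℓ‖^{-1} (I_p − y_ℓ y_ℓ'/‖y_ℓ‖²) is symmetric positive definite (in particular, invertible). -/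
/-!
At a vector `w`, the quadratic form of `‖y‖⁻¹ (I - y y' / ‖y‖²)` is `‖y‖⁻¹` times the squared
norm of the component of `w` orthogonal to `y`. So every summand of `G` is positive
semidefinite, and a nonzero `w` annihilated by all of them is parallel to every `y ℓ`, which
puts all the `y ℓ` on the line `ℝ w`.
-/

open Matrix RealInnerProductSpace

section InnerProductSpace

variable {E : Type*} [NormedAddCommGroup E] [InnerProductSpace ℝ E]

lemma norm_sq_sub_inv_mul_inner_sq_eq {y : E} (hy : y ≠ 0) (w : E) :
    ‖w‖ ^ 2 - (‖y‖ ^ 2)⁻¹ * ⟪y, w⟫ ^ 2 = ‖w - (⟪y, w⟫ / ‖y‖ ^ 2) • y‖ ^ 2 := by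
  have hy2 : ‖y‖ ^ 2 ≠ 0 := by positivity
  rw [norm_sub_sq_real, inner_smul_right, norm_smul, mul_pow, Real.norm_eq_abs, sq_abs,
    real_inner_comm]
  field_simp
  ring

lemma sum_inv_norm_mul_norm_sq_sub_inner_sq_pos {ι : Type*} [Fintype ι] {y : ι → E}
    (hy0 : ∀ i, y i ≠ 0) (hline : ¬∃ v : E, ∀ i, ∃ c : ℝ, y i = c • v) {w : E} (hw : w ≠ 0) :
    0 < ∑ i, ‖y i‖⁻¹ * (‖w‖ ^ 2 - (‖y i‖ ^ 2)⁻¹ * ⟪y i, w⟫ ^ 2) := by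
  simp only [norm_sq_sub_inv_mul_inner_sq_eq (hy0 _)]
  refine Finset.sum_pos' (fun i _ => by positivity) ?_
  by_contra! hzero
  refine hline ⟨w, fun i => ?_⟩
  set c := ⟪y i, w⟫ / ‖y i‖ ^ 2
  have hwc : w = c • y i := by
    have := (hzero i (Finset.mem_univ i)).antisymm (by positivity)
    rw [mul_eq_zero, inv_eq_zero, norm_eq_zero, sq_eq_zero_iff, norm_eq_zero,
      sub_eq_zero] at this
    exact this.resolve_left (hy0 i)
  have hc : c ≠ 0 := by
    rintro hc
    exact hw (by rw [hwc, hc, zero_smul])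
  exact ⟨c⁻¹, by rw [hwc, smul_smul, inv_mul_cancel₀ hc, one_smul]⟩

end InnerProductSpace

section Matrix

variable {m R : Type*} [DecidableEq m] [CommRing R]

lemma isHermitian_one_sub_smul_vecMulVec_self [StarRing R] [TrivialStar R] (b : R)
    (u : m → R) : (1 - b • vecMulVec u u).IsHermitian := by
  refine isHermitian_one.sub (IsHermitian.smul ?_ (IsSelfAdjoint.all b))
  rw [IsHermitian, conjTranspose_eq_transpose_of_trivial, transpose_vecMulVec]

lemma dotProduct_one_sub_smul_vecMulVec_self_mulVec [Fintype m] (b : R) (u z : m → R) :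
    z ⬝ᵥ ((1 - b • vecMulVec u u) *ᵥ z) = z ⬝ᵥ z - b * (u ⬝ᵥ z) ^ 2 := by
  rw [sub_mulVec, one_mulVec, smul_mulVec, vecMulVec_mulVec, dotProduct_sub, dotProduct_smul,
    op_smul_eq_smul, dotProduct_smul, dotProduct_comm z u, smul_eq_mul, smul_eq_mul]
  ring

lemma EuclideanSpace.dotProduct_one_sub_smul_vecMulVec_self_mulVec [Fintype m]
    (y : EuclideanSpace ℝ m) (z : m → ℝ) :
    z ⬝ᵥ ((1 - (‖y‖ ^ 2)⁻¹ • vecMulVec y.ofLp y.ofLp) *ᵥ z)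
      = ‖WithLp.toLp 2 z‖ ^ 2 - (‖y‖ ^ 2)⁻¹ * ⟪y, WithLp.toLp 2 z⟫ ^ 2 := by
  have hinner : ⟪y, WithLp.toLp 2 z⟫ = y.ofLp ⬝ᵥ z := by
    rw [EuclideanSpace.inner_eq_star_dotProduct, star_trivial, dotProduct_comm]
  rw [_root_.dotProduct_one_sub_smul_vecMulVec_self_mulVec, ← real_inner_self_eq_norm_sq (WithLp.toLp 2 z),
    EuclideanSpace.inner_toLp_toLp, star_trivial, hinner]

end Matrix

theorem stmt_10_general (n p : ℕ)
    (y : Fin n → EuclideanSpace ℝ (Fin p))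
    (hy0 : ∀ ℓ, y ℓ ≠ 0)
    (hline : ¬ ∃ v : EuclideanSpace ℝ (Fin p), ∀ ℓ, ∃ c : ℝ, y ℓ = c • v)
    (G : Matrix (Fin p) (Fin p) ℝ)
    (hG : G = ∑ ℓ, ‖y ℓ‖⁻¹ •
        ((1 : Matrix (Fin p) (Fin p) ℝ)
          - (‖y ℓ‖ ^ 2)⁻¹ • Matrix.vecMulVec (fun r => y ℓ r) (fun r => y ℓ r))) :
    G.PosDef ∧ IsUnit G.det := by
  have hpd : G.PosDef := by
    subst hG
    refine posDef_iff_dotProduct_mulVec.2 ⟨(isSelfAdjoint_sum _ fun ℓ _ =>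
      ((isHermitian_one_sub_smul_vecMulVec_self _ _).smul (.all _)).isSelfAdjoint).isHermitian,
      fun z hz => ?_⟩
    have hw : WithLp.toLp 2 z ≠ 0 := by simpa using hz
    refine (sum_inv_norm_mul_norm_sq_sub_inner_sq_pos hy0 hline hw).trans_eq ?_
    rw [sum_mulVec, star_trivial, dotProduct_sum]
    refine Finset.sum_congr rfl fun ℓ _ => ?_
    rw [smul_mulVec, dotProduct_smul, smul_eq_mul,
      EuclideanSpace.dotProduct_one_sub_smul_vecMulVec_self_mulVec]
  exact ⟨hpd, (isUnit_iff_isUnit_det G).1 hpd.isUnit⟩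

/-- Let `y 0, …, y (n-1)` be nonzero vectors in `ℝ^p` (written
`y ℓ = x ℓ − t`) that are not all contained in a single one-dimensional linear subspace.
Then `G := ∑ ℓ ‖y ℓ‖⁻¹ (I_p − y ℓ (y ℓ)' / ‖y ℓ‖²)` is symmetric positive definite, and in
particular invertible. -/
theorem stmt_10 (n p : ℕ) (x : Fin n → EuclideanSpace ℝ (Fin p))
    (t : EuclideanSpace ℝ (Fin p))
    (y : Fin n → EuclideanSpace ℝ (Fin p)) (hy : ∀ ℓ, y ℓ = x ℓ - t)
    (hy0 : ∀ ℓ, y ℓ ≠ 0)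
    (hline : ¬ ∃ v : EuclideanSpace ℝ (Fin p), ∀ ℓ, ∃ c : ℝ, y ℓ = c • v)
    (G : Matrix (Fin p) (Fin p) ℝ)
    (hG : G = ∑ ℓ, ‖y ℓ‖⁻¹ •
        ((1 : Matrix (Fin p) (Fin p) ℝ)
          - (‖y ℓ‖ ^ 2)⁻¹ • Matrix.vecMulVec (fun r => y ℓ r) (fun r => y ℓ r))) :
    G.PosDef ∧ IsUnit G.det :=
  stmt_10_general n p y hy0 hline G hG
end

section
/- Let x_1,…,x_n ∈ ℝ^p and suppose t_0 is the unique minimizer of t ↦ Σ_{ℓ=1}^n ‖x_ℓ − t‖. Fix i ∈ {1,…,n} and j ∈ {1,…,p}, and for each ε ∈ ℝ let t_ε be any minimizer of the corresponding objective for the perturbed sample in which x_i is replaced by x_i + ε e_j. Then t_ε → t_0 as ε → 0. -/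
open Filter

/-- Let `x 0, …, x (n-1) ∈ ℝ^p` and suppose `t₀` is the *unique* minimizer
of `t ↦ ∑ ℓ ‖x ℓ − t‖`.  Fix `i, j` and for each `ε ∈ ℝ` let `tm ε` be any minimizer of the
corresponding objective for the perturbed sample in which `x i` is replaced by
`x i + ε • e j` (`e j` the `j`-th standard basis vector).  Then `tm ε → t₀` as `ε → 0`. -/
theorem stmt_12 (n p : ℕ) (x : Fin n → EuclideanSpace ℝ (Fin p))
    (t₀ : EuclideanSpace ℝ (Fin p))
    (hmin : ∀ t : EuclideanSpace ℝ (Fin p), ∑ ℓ, ‖x ℓ - t₀‖ ≤ ∑ ℓ, ‖x ℓ - t‖)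
    (huniq : ∀ t : EuclideanSpace ℝ (Fin p),
      (∀ t' : EuclideanSpace ℝ (Fin p), ∑ ℓ, ‖x ℓ - t‖ ≤ ∑ ℓ, ‖x ℓ - t'‖) → t = t₀)
    (i : Fin n) (j : Fin p)
    (tm : ℝ → EuclideanSpace ℝ (Fin p))
    (htm : ∀ ε : ℝ, ∀ t : EuclideanSpace ℝ (Fin p),
      ∑ ℓ, ‖Function.update x i (x i + ε • EuclideanSpace.single j (1 : ℝ)) ℓ - tm ε‖
        ≤ ∑ ℓ, ‖Function.update x i (x i + ε • EuclideanSpace.single j (1 : ℝ)) ℓ - t‖) :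
    Tendsto tm (nhds 0) (nhds t₀) := by
  set f : EuclideanSpace ℝ (Fin p) → ℝ := fun t => ∑ ℓ, ‖x ℓ - t‖ with hfdef
  set e : EuclideanSpace ℝ (Fin p) := EuclideanSpace.single j (1 : ℝ) with hedef
  -- the perturbed objective equals f up to an explicit correction
  have key : ∀ ε : ℝ, ∀ t : EuclideanSpace ℝ (Fin p),
      (∑ ℓ, ‖Function.update x i (x i + ε • e) ℓ - t‖)
        = f t + (‖x i + ε • e - t‖ - ‖x i - t‖) := by
    intro ε t
    have h1 : ∀ ℓ, ‖Function.update x i (x i + ε • e) ℓ - t‖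
        = ‖x ℓ - t‖ + (if ℓ = i then ‖x i + ε • e - t‖ - ‖x i - t‖ else 0) := by
      intro ℓ
      by_cases h : ℓ = i <;> simp [Function.update_apply, h]
    simp only [h1, Finset.sum_add_distrib, Finset.sum_ite_eq', Finset.mem_univ, if_true, hfdef]
  -- the correction term is bounded by |ε|
  have hcorr : ∀ ε : ℝ, ∀ t : EuclideanSpace ℝ (Fin p),
      |‖x i + ε • e - t‖ - ‖x i - t‖| ≤ |ε| := by
    intro ε t
    have h1 : |‖x i + ε • e - t‖ - ‖x i - t‖| ≤ ‖(x i + ε • e - t) - (x i - t)‖ :=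
      abs_norm_sub_norm_le _ _
    have h2 : (x i + ε • e - t) - (x i - t) = ε • e := by abel
    have h3 : ‖ε • e‖ = |ε| := by
      rw [norm_smul, hedef, EuclideanSpace.norm_single]
      simp
    rw [h2, h3] at h1
    exact h1
  -- near-minimizer property: f (tm ε) ≤ f t₀ + 2 * |ε|
  have hB : ∀ ε : ℝ, f (tm ε) ≤ f t₀ + 2 * |ε| := by
    intro ε
    have h1 : f (tm ε) ≤ (∑ ℓ, ‖Function.update x i (x i + ε • e) ℓ - tm ε‖) + |ε| := by
      rw [key]
      have := hcorr ε (tm ε)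
      have := neg_abs_le (‖x i + ε • e - tm ε‖ - ‖x i - tm ε‖)
      linarith [abs_le.mp (hcorr ε (tm ε))]
    have h2 : (∑ ℓ, ‖Function.update x i (x i + ε • e) ℓ - tm ε‖)
        ≤ ∑ ℓ, ‖Function.update x i (x i + ε • e) ℓ - t₀‖ := htm ε t₀
    have h3 : (∑ ℓ, ‖Function.update x i (x i + ε • e) ℓ - t₀‖) ≤ f t₀ + |ε| := by
      rw [key]
      linarith [abs_le.mp (hcorr ε t₀)]
    linarith
  -- boundedness of minimizers for |ε| ≤ 1
  set R : ℝ := f t₀ + 2 + ‖x i - t₀‖ with hRdef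
  have hC : ∀ ε : ℝ, |ε| ≤ 1 → dist (tm ε) t₀ ≤ R := by
    intro ε hε
    have h1 : ‖x i - tm ε‖ ≤ f (tm ε) := by
      refine Finset.single_le_sum (f := fun ℓ => ‖x ℓ - tm ε‖) ?_ (Finset.mem_univ i)
      intro ℓ _; positivity
    have h2 : dist (tm ε) t₀ ≤ ‖tm ε - x i‖ + ‖x i - t₀‖ := by
      rw [dist_eq_norm]
      calc ‖tm ε - t₀‖ = ‖(tm ε - x i) + (x i - t₀)‖ := by abel_nf
        _ ≤ ‖tm ε - x i‖ + ‖x i - t₀‖ := norm_add_le _ _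
    have h3 : ‖tm ε - x i‖ = ‖x i - tm ε‖ := norm_sub_rev _ _
    have := hB ε
    rw [hRdef]
    linarith
  have hfc : Continuous f := by
    apply continuous_finset_sum
    intro ℓ _
    exact (continuous_const.sub continuous_id).norm
  rw [Metric.tendsto_nhds_nhds]
  intro δ hδ
  set S : Set (EuclideanSpace ℝ (Fin p)) :=
    Metric.closedBall t₀ R ∩ (Metric.ball t₀ δ)ᶜ with hSdef
  have hScompact : IsCompact S :=
    (isCompact_closedBall t₀ R).inter_right Metric.isOpen_ball.isClosed_compl
  rcases S.eq_empty_or_nonempty with hS | hS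
  · refine ⟨1, one_pos, fun ε hε => ?_⟩
    have hε1 : |ε| ≤ 1 := by
      rw [Real.dist_eq, sub_zero] at hε; linarith
    by_contra h
    push_neg at h
    have : tm ε ∈ S := ⟨Metric.mem_closedBall.mpr (hC ε hε1), fun hb => absurd (Metric.mem_ball.mp hb) (not_lt.mpr h)⟩
    rw [hS] at this
    exact this
  · obtain ⟨ts, hts, hmin'⟩ := hScompact.exists_isMinOn hS hfc.continuousOn
    have hlt : f t₀ < f ts := by
      by_contra h
      push_neg at h
      have hts0 : ts = t₀ := huniq ts (fun t' => le_trans h (hmin t'))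
      have : ¬ dist ts t₀ < δ := fun hb => hts.2 (Metric.mem_ball.mpr hb)
      rw [hts0, dist_self] at this
      exact this hδ
    refine ⟨min 1 ((f ts - f t₀) / 2), lt_min one_pos (by linarith), fun ε hε => ?_⟩
    rw [Real.dist_eq, sub_zero] at hε
    have hε1 : |ε| ≤ 1 := le_of_lt (lt_of_lt_of_le hε (min_le_left _ _))
    have hε2 : |ε| < (f ts - f t₀) / 2 := lt_of_lt_of_le hε (min_le_right _ _)
    by_contra h
    push_neg at h
    have hmem : tm ε ∈ S :=
      ⟨Metric.mem_closedBall.mpr (hC ε hε1), fun hb => absurd (Metric.mem_ball.mp hb) (not_lt.mpr h)⟩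
    have h1 : f ts ≤ f (tm ε) := isMinOn_iff.mp hmin' _ hmem
    have h2 := hB ε
    linarith
end

section
/- Under the Gaussian latent factor model, the reconstructions x̂_i = t_0 + P_k(x_i − t_0) satisfy the risk decomposition (1/n) Σ_{i=1}^n E‖x̂_i − V_0 y_i‖² = E[tr{(I_p − P_k) S_0}] + (2/n) Σ_{i=1}^n E(x̂_i' ε_i) − pσ², provided all the expectations are finite. -/
open Matrix MeasureTheory ProbabilityTheory Finset

/-- A measure `μ` on `ℝ^q` is the `q`-variate Gaussian distribution `N_q(m, C)` iff every
linear functional pushes it forward to the corresponding univariate Gaussian distribution. -/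
def IsMvGaussianLaw (q : ℕ) (μ : Measure (Fin q → ℝ)) (m : Fin q → ℝ)
    (C : Matrix (Fin q) (Fin q) ℝ) : Prop :=
  ∀ a : Fin q → ℝ,
    μ.map (fun v => a ⬝ᵥ v)
      = ProbabilityTheory.gaussianReal (a ⬝ᵥ m) (Real.toNNReal (a ⬝ᵥ C.mulVec a))

/-- Codomain family for the combined family `(y_1, …, y_n, ε_1, …, ε_n)`. -/
abbrev famType (n d p : ℕ) : Fin n ⊕ Fin n → Type :=
  Sum.elim (fun _ => Fin d → ℝ) (fun _ => Fin p → ℝ)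

/-- The measurable-space structures on the codomains of the combined family. -/
def famMS (n d p : ℕ) : ∀ s : Fin n ⊕ Fin n, MeasurableSpace (famType n d p s)
  | .inl _ => (inferInstance : MeasurableSpace (Fin d → ℝ))
  | .inr _ => (inferInstance : MeasurableSpace (Fin p → ℝ))

/-- The combined family `(y_1, …, y_n, ε_1, …, ε_n)` of random vectors. -/
def fam {Ω : Type*} {n d p : ℕ} (Y : Fin n → Ω → (Fin d → ℝ))
    (E : Fin n → Ω → (Fin p → ℝ)) : ∀ s : Fin n ⊕ Fin n, Ω → famType n d p s
  | .inl i => Y i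
  | .inr i => E i

/-- `P` is the orthogonal projection onto the span of eigenvectors of `A` corresponding to its
`k` largest eigenvalues, where `A` has `p` distinct eigenvalues. -/
def IsTopProj (p k : ℕ) (A P : Matrix (Fin p) (Fin p) ℝ) : Prop :=
  ∃ (u : Fin p → Fin p → ℝ) (s : Fin p → ℝ),
    (∀ a b, u a ⬝ᵥ u b = if a = b then (1 : ℝ) else 0) ∧ StrictAnti s ∧
    (∀ ℓ, A.mulVec (u ℓ) = s ℓ • u ℓ) ∧
    P = ∑ ℓ ∈ Finset.univ.filter (fun ℓ : Fin p => (ℓ : ℕ) < k), Matrix.vecMulVec (u ℓ) (u ℓ)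

open Classical in
/-- The orthogonal projection onto the span of eigenvectors of `A` corresponding to its `k`
largest eigenvalues (well defined whenever the eigenvalues of `A` are distinct, which holds
almost surely for the sample covariance matrix under the model below). -/
noncomputable def topProj (p k : ℕ) (A : Matrix (Fin p) (Fin p) ℝ) :
    Matrix (Fin p) (Fin p) ℝ :=
  if h : ∃ P, IsTopProj p k A P then h.choose else 0

/-- The sample mean `t₀` of the sample `X`. -/
noncomputable def sampleMean (n p : ℕ) (X : Fin n → Fin p → ℝ) : Fin p → ℝ :=
  (n : ℝ)⁻¹ • ∑ ℓ, X ℓ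

/-- The sample covariance matrix `S₀` of the sample `X`. -/
noncomputable def sampleCov (n p : ℕ) (X : Fin n → Fin p → ℝ) : Matrix (Fin p) (Fin p) ℝ :=
  (n : ℝ)⁻¹ • ∑ ℓ, Matrix.vecMulVec (X ℓ - sampleMean n p X) (X ℓ - sampleMean n p X)


/-! With `Q = I - P_k`, a symmetric idempotent, and `rᵢ = xᵢ - t₀`, the reconstruction error is
`x̂ᵢ - V₀yᵢ = εᵢ - Q rᵢ`, so pointwise
`‖x̂ᵢ - V₀yᵢ‖² = rᵢ'Q rᵢ + 2 x̂ᵢ'εᵢ - 2 (V₀yᵢ)'εᵢ - ‖εᵢ‖²`, and `∑ᵢ rᵢ'Q rᵢ = n tr(Q S₀)`.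
Taking expectations, the cross term `(V₀yᵢ)'εᵢ` has mean zero because `yᵢ` and `εᵢ` are
independent and `εᵢ` is centred, while `E‖εᵢ‖² = pσ²`. -/

open scoped NNReal

namespace ProbabilityTheory

variable {Ω : Type*} [MeasurableSpace Ω] {P : Measure Ω}

section GaussianReal

variable {X : Ω → ℝ} {μ : ℝ} {v : ℝ≥0}

lemma HasLaw.memLp_of_gaussianReal (hX : HasLaw X (gaussianReal μ v) P) (q : ℝ≥0) :
    MemLp X q P := by
  have h := memLp_id_gaussianReal (μ := μ) (v := v) q
  rwa [← hX.map_eq, memLp_map_measure_iff aestronglyMeasurable_id hX.aemeasurable] at h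

lemma HasLaw.integrable_of_gaussianReal (hX : HasLaw X (gaussianReal μ v) P) : Integrable X P :=
  memLp_one_iff_integrable.1 (by exact_mod_cast hX.memLp_of_gaussianReal 1)

lemma HasLaw.integral_of_gaussianReal (hX : HasLaw X (gaussianReal μ v) P) :
    ∫ ω, X ω ∂P = μ :=
  hX.integral_eq.trans integral_id_gaussianReal

lemma HasLaw.integral_sq_of_gaussianReal [IsProbabilityMeasure P]
    (hX : HasLaw X (gaussianReal μ v) P) : ∫ ω, X ω ^ 2 ∂P = v + μ ^ 2 := by
  have hvar := variance_eq_sub (by exact_mod_cast hX.memLp_of_gaussianReal 2)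
  rw [hX.variance_eq, variance_id_gaussianReal, hX.integral_of_gaussianReal] at hvar
  simp only [Pi.pow_apply] at hvar
  linarith

end GaussianReal

variable {q : ℕ} {U W : Ω → Fin q → ℝ}

lemma IndepFun.integrable_dotProduct (hUW : IndepFun U W P)
    (hU : ∀ j, Integrable (fun ω => U ω j) P) (hW : ∀ j, Integrable (fun ω => W ω j) P) :
    Integrable (fun ω => U ω ⬝ᵥ W ω) P :=
  integrable_finsetSum _ fun j _ =>
    (hUW.comp (measurable_pi_apply j) (measurable_pi_apply j)).integrable_mul (hU j) (hW j)

lemma IndepFun.integral_dotProduct (hUW : IndepFun U W P)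
    (hU : ∀ j, Integrable (fun ω => U ω j) P) (hW : ∀ j, Integrable (fun ω => W ω j) P) :
    ∫ ω, U ω ⬝ᵥ W ω ∂P = (fun j => ∫ ω, U ω j ∂P) ⬝ᵥ (fun j => ∫ ω, W ω j ∂P) := by
  have hUWj j : IndepFun (fun ω => U ω j) (fun ω => W ω j) P :=
    hUW.comp (measurable_pi_apply j) (measurable_pi_apply j)
  simp only [dotProduct]
  rw [integral_finsetSum (f := fun j ω => U ω j * W ω j) _
    fun j _ => (hUWj j).integrable_mul (hU j) (hW j)]
  exact Finset.sum_congr rfl fun j _ => (hUWj j).integral_fun_mul_eq_mul_integral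
    (hU j).aestronglyMeasurable (hW j).aestronglyMeasurable

end ProbabilityTheory

namespace IsMvGaussianLaw

variable {Ω : Type*} [MeasurableSpace Ω] {P : Measure Ω} {q : ℕ} {Z : Ω → Fin q → ℝ}
  {m : Fin q → ℝ} {C : Matrix (Fin q) (Fin q) ℝ}

lemma hasLaw_dotProduct (hZ : Measurable Z) (h : IsMvGaussianLaw q (P.map Z) m C)
    (a : Fin q → ℝ) :
    HasLaw (fun ω => a ⬝ᵥ Z ω) (gaussianReal (a ⬝ᵥ m) (a ⬝ᵥ C *ᵥ a).toNNReal) P where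
  aemeasurable := by fun_prop
  map_eq := by
    rw [← h a, Measure.map_map (by fun_prop) hZ]
    rfl

lemma hasLaw_apply (hZ : Measurable Z) (h : IsMvGaussianLaw q (P.map Z) m C) (j : Fin q) :
    HasLaw (fun ω => Z ω j) (gaussianReal (m j) (C j j).toNNReal) P := by
  simpa [single_one_dotProduct, mulVec_single_one] using h.hasLaw_dotProduct hZ (Pi.single j 1)

lemma integral_dotProduct_self [IsProbabilityMeasure P] (hZ : Measurable Z)
    (h : IsMvGaussianLaw q (P.map Z) 0 C) (hC : ∀ j, 0 ≤ C j j) :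
    Integrable (fun ω => Z ω ⬝ᵥ Z ω) P ∧ ∫ ω, Z ω ⬝ᵥ Z ω ∂P = C.trace := by
  have hsq j : Integrable (fun ω => Z ω j * Z ω j) P := by
    simpa [sq] using ((h.hasLaw_apply hZ j).memLp_of_gaussianReal 2).integrable_sq
  refine ⟨integrable_finsetSum _ fun j _ => hsq j, ?_⟩
  simp only [dotProduct]
  rw [integral_finsetSum _ fun j _ => hsq j]
  refine Finset.sum_congr rfl fun j _ => ?_
  simpa [sq, hC j] using (h.hasLaw_apply hZ j).integral_sq_of_gaussianReal

lemma integral_mulVec_dotProduct_eq_zero {d : ℕ} {y : Ω → Fin d → ℝ} {e : Ω → Fin q → ℝ}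
    (hy : Measurable y) (he : Measurable e) {m : Fin d → ℝ} {Cy : Matrix (Fin d) (Fin d) ℝ}
    (hyG : IsMvGaussianLaw d (P.map y) m Cy) (heG : IsMvGaussianLaw q (P.map e) 0 C)
    (hye : IndepFun y e P) (V : Matrix (Fin q) (Fin d) ℝ) :
    Integrable (fun ω => V *ᵥ y ω ⬝ᵥ e ω) P ∧ ∫ ω, V *ᵥ y ω ⬝ᵥ e ω ∂P = 0 := by
  have hVy : IndepFun (fun ω => V *ᵥ y ω) e P := hye.comp (φ := (V *ᵥ ·)) (ψ := id)
    V.mulVecLin.continuous_of_finiteDimensional.measurable measurable_id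
  have hU j : Integrable (fun ω => (V *ᵥ y ω) j) P :=
    (hyG.hasLaw_dotProduct hy (V j)).integrable_of_gaussianReal
  have hW j : Integrable (fun ω => e ω j) P := (heG.hasLaw_apply he j).integrable_of_gaussianReal
  refine ⟨hVy.integrable_dotProduct hU hW, ?_⟩
  rw [hVy.integral_dotProduct hU hW]
  simp [(heG.hasLaw_apply he _).integral_of_gaussianReal]

end IsMvGaussianLaw

namespace Matrix

variable {m : Type*} [Fintype m]

lemma mulVec_dotProduct_mulVec_self_of_isSymm_of_isIdempotentElem {Q : Matrix m m ℝ}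
    (hQt : Q.IsSymm) (hQQ : IsIdempotentElem Q) (r : m → ℝ) :
    Q *ᵥ r ⬝ᵥ Q *ᵥ r = r ⬝ᵥ Q *ᵥ r := by
  rw [dotProduct_comm, dotProduct_mulVec, ← mulVec_transpose, hQt.eq, mulVec_mulVec, hQQ.eq,
    dotProduct_comm]

lemma isIdempotentElem_sum_vecMulVec_self {ι : Type*} [DecidableEq ι] {u : ι → m → ℝ}
    (hu : ∀ a b, u a ⬝ᵥ u b = if a = b then 1 else 0) (s : Finset ι) :
    IsIdempotentElem (∑ ℓ ∈ s, vecMulVec (u ℓ) (u ℓ)) := by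
  simp_rw [IsIdempotentElem, Finset.sum_mul_sum, vecMulVec_mul_vecMulVec, hu, ite_smul,
    one_smul, zero_smul, apply_ite (vecMulVec _), vecMulVec_zero, Finset.sum_ite_eq]
  exact Finset.sum_congr rfl fun ℓ hℓ => if_pos hℓ

end Matrix

section TopProj

variable {p k : ℕ} {A Pm : Matrix (Fin p) (Fin p) ℝ}

lemma IsTopProj.isSymm (h : IsTopProj p k A Pm) : Pm.IsSymm := by
  obtain ⟨u, -, -, -, -, rfl⟩ := h
  simp [IsSymm, transpose_sum]

lemma IsTopProj.isIdempotentElem (h : IsTopProj p k A Pm) : IsIdempotentElem Pm := by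
  obtain ⟨u, -, hu, -, -, rfl⟩ := h
  exact isIdempotentElem_sum_vecMulVec_self hu _

variable (p k A)

lemma isSymm_topProj : (topProj p k A).IsSymm := by
  unfold topProj
  split_ifs with h
  · exact h.choose_spec.isSymm
  · exact isSymm_zero

lemma isIdempotentElem_topProj : IsIdempotentElem (topProj p k A) := by
  unfold topProj
  split_ifs with h
  · exact h.choose_spec.isIdempotentElem
  · exact IsIdempotentElem.zero

end TopProj

lemma natCast_mul_trace_mul_sampleCov {n p : ℕ} (M : Matrix (Fin p) (Fin p) ℝ)
    (X : Fin n → Fin p → ℝ) :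
    (n : ℝ) * trace (M * sampleCov n p X)
      = ∑ i, (X i - sampleMean n p X) ⬝ᵥ M *ᵥ (X i - sampleMean n p X) := by
  rcases eq_or_ne n 0 with rfl | hn
  · simp
  rw [sampleCov, Matrix.mul_smul, trace_smul, smul_eq_mul, ← mul_assoc,
    mul_inv_cancel₀ (Nat.cast_ne_zero.2 hn), one_mul, mul_sum, trace_sum]
  simp [mul_vecMulVec, dotProduct_comm]

lemma sum_sq_reconstruction_error {p : ℕ} {Pm : Matrix (Fin p) (Fin p) ℝ} (hPt : Pm.IsSymm)
    (hPP : IsIdempotentElem Pm) {t x w e xh : Fin p → ℝ} (hx : x = w + e)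
    (hxh : xh = t + Pm *ᵥ (x - t)) :
    ∑ j, (xh j - w j) ^ 2
      = (x - t) ⬝ᵥ (1 - Pm) *ᵥ (x - t) + 2 * (xh ⬝ᵥ e) - 2 * (w ⬝ᵥ e) - e ⬝ᵥ e := by
  have hres : (1 - Pm) *ᵥ (x - t) = x - xh := by
    rw [hxh, sub_mulVec, one_mulVec]
    abel
  have herr : xh - w = e - (1 - Pm) *ᵥ (x - t) := by
    rw [hres, hx]
    abel
  calc ∑ j, (xh j - w j) ^ 2 = (xh - w) ⬝ᵥ (xh - w) := by simp [dotProduct, sq]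
    _ = e ⬝ᵥ e - 2 * (e ⬝ᵥ (1 - Pm) *ᵥ (x - t))
          + (1 - Pm) *ᵥ (x - t) ⬝ᵥ (1 - Pm) *ᵥ (x - t) := by
      rw [herr]
      simp only [dotProduct_sub, sub_dotProduct, dotProduct_comm _ e]
      ring
    _ = _ := by
      rw [mulVec_dotProduct_mulVec_self_of_isSymm_of_isIdempotentElem (isSymm_one.sub hPt)
        hPP.one_sub, hres, hx]
      simp only [dotProduct_sub, sub_dotProduct, dotProduct_add, add_dotProduct,
        dotProduct_comm e w, dotProduct_comm e xh]
      ring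

lemma integral_sum_sq_reconstruction_error {Ω : Type*} [MeasurableSpace Ω] {μ : Measure Ω}
    {p : ℕ} {Pm : Ω → Matrix (Fin p) (Fin p) ℝ} (hPt : ∀ ω, (Pm ω).IsSymm)
    (hPP : ∀ ω, IsIdempotentElem (Pm ω)) {t x w e xh : Ω → Fin p → ℝ}
    (hx : ∀ ω, x ω = w ω + e ω) (hxh : ∀ ω, xh ω = t ω + Pm ω *ᵥ (x ω - t ω))
    (h_err : Integrable (fun ω => ∑ j, (xh ω j - w ω j) ^ 2) μ)
    (h_xe : Integrable (fun ω => xh ω ⬝ᵥ e ω) μ) (h_we : Integrable (fun ω => w ω ⬝ᵥ e ω) μ)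
    (h_ee : Integrable (fun ω => e ω ⬝ᵥ e ω) μ) :
    Integrable (fun ω => (x ω - t ω) ⬝ᵥ (1 - Pm ω) *ᵥ (x ω - t ω)) μ ∧
      ∫ ω, (x ω - t ω) ⬝ᵥ (1 - Pm ω) *ᵥ (x ω - t ω) ∂μ
        = ∫ ω, ∑ j, (xh ω j - w ω j) ^ 2 ∂μ - 2 * ∫ ω, xh ω ⬝ᵥ e ω ∂μ
          + 2 * ∫ ω, w ω ⬝ᵥ e ω ∂μ + ∫ ω, e ω ⬝ᵥ e ω ∂μ := by
  have hquad : (fun ω => (x ω - t ω) ⬝ᵥ (1 - Pm ω) *ᵥ (x ω - t ω)) = fun ω =>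
      ∑ j, (xh ω j - w ω j) ^ 2 - 2 * (xh ω ⬝ᵥ e ω) + 2 * (w ω ⬝ᵥ e ω) + e ω ⬝ᵥ e ω := by
    funext ω
    rw [sum_sq_reconstruction_error (hPt ω) (hPP ω) (hx ω) (hxh ω)]
    ring
  have h_xe2 := h_xe.const_mul 2
  have h_we2 := h_we.const_mul 2
  rw [hquad]
  refine ⟨((h_err.sub h_xe2).add h_we2).add h_ee, ?_⟩
  rw [integral_add, integral_add, integral_sub, integral_const_mul, integral_const_mul]
  exacts [h_err, h_xe2, h_err.sub h_xe2, h_we2, (h_err.sub h_xe2).add h_we2, h_ee]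

theorem stmt_14_general (n p d k : ℕ) (hn : 2 ≤ n) (σ : ℝ) (V₀ : Matrix (Fin p) (Fin d) ℝ)
    (lam : Fin d → ℝ)
    (Ω : Type*) [MeasureSpace Ω] [IsProbabilityMeasure (ℙ : Measure Ω)]
    (Y : Fin n → Ω → (Fin d → ℝ)) (E : Fin n → Ω → (Fin p → ℝ))
    (hYmeas : ∀ i, Measurable (Y i)) (hEmeas : ∀ i, Measurable (E i))
    (hY : ∀ i, IsMvGaussianLaw d ((ℙ : Measure Ω).map (Y i)) 0 (Matrix.diagonal lam))
    (hE : ∀ i, IsMvGaussianLaw p ((ℙ : Measure Ω).map (E i)) 0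
      (σ ^ 2 • (1 : Matrix (Fin p) (Fin p) ℝ)))
    (hindep : iIndepFun (m := famMS n d p) (fam Y E) (ℙ : Measure Ω))
    (X : Fin n → Ω → (Fin p → ℝ)) (hX : ∀ i ω, X i ω = V₀.mulVec (Y i ω) + E i ω)
    (xhat : Fin n → Ω → (Fin p → ℝ))
    (hxhat : ∀ i ω, xhat i ω = sampleMean n p (fun a => X a ω)
      + (topProj p k (sampleCov n p (fun a => X a ω))).mulVec
          (X i ω - sampleMean n p (fun a => X a ω)))
    (hint1 : ∀ i, Integrable
      (fun ω => ∑ j, (xhat i ω j - V₀.mulVec (Y i ω) j) ^ 2) (ℙ : Measure Ω))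
    (hint3 : ∀ i, Integrable (fun ω => xhat i ω ⬝ᵥ E i ω) (ℙ : Measure Ω)) :
    (n : ℝ)⁻¹ * ∑ i, ∫ ω, ∑ j, (xhat i ω j - V₀.mulVec (Y i ω) j) ^ 2 ∂(ℙ : Measure Ω)
      = (∫ ω, Matrix.trace ((1 - topProj p k (sampleCov n p (fun a => X a ω)))
            * sampleCov n p (fun a => X a ω)) ∂(ℙ : Measure Ω))
        + (2 / (n : ℝ)) * ∑ i, ∫ ω, xhat i ω ⬝ᵥ E i ω ∂(ℙ : Measure Ω)
        - p * σ ^ 2 := by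
  have hcross i := (hY i).integral_mulVec_dotProduct_eq_zero (hYmeas i) (hEmeas i) (hE i)
    (hindep.indepFun Sum.inl_ne_inr) V₀
  have hnoise i := (hE i).integral_dotProduct_self (hEmeas i) fun _ => by simp [sq_nonneg]
  have hrisk i := integral_sum_sq_reconstruction_error
    (fun ω => isSymm_topProj p k (sampleCov n p (fun a => X a ω)))
    (fun ω => isIdempotentElem_topProj p k (sampleCov n p (fun a => X a ω))) (hX i) (hxhat i)
    (hint1 i) (hint3 i) (hcross i).1 (hnoise i).1
  have htrace := (integral_finsetSum (μ := ℙ) Finset.univ fun i _ => (hrisk i).1).symm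
  simp_rw [← natCast_mul_trace_mul_sampleCov, integral_const_mul, fun i => (hrisk i).2,
    fun i => (hcross i).2, fun i => (hnoise i).2] at htrace
  simp only [trace_smul, trace_one, Fintype.card_fin, smul_eq_mul, mul_zero, add_zero,
    Finset.sum_add_distrib, Finset.sum_sub_distrib, ← Finset.mul_sum, Finset.sum_const,
    Finset.card_univ, nsmul_eq_mul] at htrace
  have hn0 : (n : ℝ) ≠ 0 := by positivity
  field_simp
  linarith

/-- Under the Gaussian latent factor model, the reconstructions
`x̂ᵢ = t₀ + P_k(xᵢ − t₀)` satisfy the risk decomposition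
`(1/n) ∑ᵢ E‖x̂ᵢ − V₀yᵢ‖² = E[tr{(I_p − P_k)S₀}] + (2/n) ∑ᵢ E(x̂ᵢ'εᵢ) − pσ²`,
provided all the expectations are finite. -/
theorem stmt_14 (n p d k : ℕ) (hn : 2 ≤ n) (hp : 2 ≤ p) (hd1 : 1 ≤ d) (hdp : d < p)
    (hk1 : 1 ≤ k) (hkp : k ≤ p)
    (σ : ℝ) (hσ : 0 < σ)
    (V₀ : Matrix (Fin p) (Fin d) ℝ) (hV₀ : V₀ᵀ * V₀ = 1)
    (lam : Fin d → ℝ) (hlam : ∀ a, 0 < lam a)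
    (Ω : Type*) [MeasureSpace Ω] [IsProbabilityMeasure (ℙ : Measure Ω)]
    (Y : Fin n → Ω → (Fin d → ℝ)) (E : Fin n → Ω → (Fin p → ℝ))
    (hYmeas : ∀ i, Measurable (Y i)) (hEmeas : ∀ i, Measurable (E i))
    (hY : ∀ i, IsMvGaussianLaw d ((ℙ : Measure Ω).map (Y i)) 0 (Matrix.diagonal lam))
    (hE : ∀ i, IsMvGaussianLaw p ((ℙ : Measure Ω).map (E i)) 0
      (σ ^ 2 • (1 : Matrix (Fin p) (Fin p) ℝ)))
    (hindep : iIndepFun (m := famMS n d p) (fam Y E) (ℙ : Measure Ω))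
    (X : Fin n → Ω → (Fin p → ℝ)) (hX : ∀ i ω, X i ω = V₀.mulVec (Y i ω) + E i ω)
    (xhat : Fin n → Ω → (Fin p → ℝ))
    (hxhat : ∀ i ω, xhat i ω = sampleMean n p (fun a => X a ω)
      + (topProj p k (sampleCov n p (fun a => X a ω))).mulVec
          (X i ω - sampleMean n p (fun a => X a ω)))
    (hint1 : ∀ i, Integrable
      (fun ω => ∑ j, (xhat i ω j - V₀.mulVec (Y i ω) j) ^ 2) (ℙ : Measure Ω))
    (hint2 : Integrable (fun ω =>
      Matrix.trace ((1 - topProj p k (sampleCov n p (fun a => X a ω)))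
        * sampleCov n p (fun a => X a ω))) (ℙ : Measure Ω))
    (hint3 : ∀ i, Integrable (fun ω => xhat i ω ⬝ᵥ E i ω) (ℙ : Measure Ω)) :
    (n : ℝ)⁻¹ * ∑ i, ∫ ω, ∑ j, (xhat i ω j - V₀.mulVec (Y i ω) j) ^ 2 ∂(ℙ : Measure Ω)
      = (∫ ω, Matrix.trace ((1 - topProj p k (sampleCov n p (fun a => X a ω)))
            * sampleCov n p (fun a => X a ω)) ∂(ℙ : Measure Ω))
        + (2 / (n : ℝ)) * ∑ i, ∫ ω, xhat i ω ⬝ᵥ E i ω ∂(ℙ : Measure Ω)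
        - p * σ ^ 2 :=
  stmt_14_general n p d k hn σ V₀ lam Ω Y E hYmeas hEmeas hY hE hindep X hX xhat hxhat hint1 hint3
end
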